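/- Define f(x,y) = h₂(h₂⁻¹(x) * h₂⁻¹(y)) − y for x, y ∈ (0, 1/2). Then f is strictly increasing in x and strictly decreasing in y: for all x, x′, y, y′ ∈ (0, 1/2), if x < x′ then f(x,y) < f(x′,y), and if y < y′ then f(x,y) > f(x,y′). -/

import Mathlib

/-- The binary entropy function `h₂(x) = −x log₂ x − (1−x) log₂ (1−x)`
(with `0 · log₂ 0 = 0`, automatic since `Real.logb 2 0 = 0`). -/
noncomputable def h2 (x : ℝ) : ℝ := -x * Real.logb 2 x - (1 - x) * Real.logb 2 (1 - x)

/-- The (cyclic) convolution `α * β = α(1−β) + β(1−α)`. -/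
def convo (a b : ℝ) : ℝ := a * (1 - b) + b * (1 - a)

/-!
With `a * b = b + a (1 - 2b) = a + (1 - 2a) b`, monotonicity in `x` is monotonicity of `h₂` on
`[0, 1/2]` composed with the increasing maps `h₂⁻¹` and `a ↦ a * b` (as `b < 1/2`). For `y`, write
`a = h₂⁻¹(x)` and `b = h₂⁻¹(y)`, so `f(x, y) = h₂(a * b) − h₂(b)`; its derivative in `b` is
`(1 − 2a) h₂'(a * b) − h₂'(b)`, where `h₂'(p) = log₂((1 − p)/p)` is positive and decreasing on `(0, 1/2)`. Since `b < a * b < 1/2`, we get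
`(1 − 2a) h₂'(a * b) < h₂'(a * b) < h₂'(b)`.
-/

open Real Set

lemma h2_eq_binEntropy_div (x : ℝ) : h2 x = binEntropy x / log 2 := by
  simp only [h2, binEntropy, logb, log_inv]
  ring

lemma h2_zero : h2 0 = 0 := by simp [h2]

lemma h2_one_half : h2 (1 / 2) = 1 := by
  rw [h2_eq_binEntropy_div, one_div, binEntropy_two_inv, div_self (log_pos one_lt_two).ne']

lemma h2_strictMonoOn : StrictMonoOn h2 (Icc 0 (1 / 2)) := by
  intro a ha b hb hab
  rw [one_div] at ha hb
  rw [h2_eq_binEntropy_div, h2_eq_binEntropy_div]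
  exact div_lt_div_of_pos_right (binEntropy_strictMonoOn ha hb hab) (log_pos one_lt_two)

section Convolution

variable {a b : ℝ}

lemma convo_eq_add_mul_left (a b : ℝ) : convo a b = b + a * (1 - 2 * b) := by
  unfold convo; ring

lemma convo_eq_add_mul_right (a b : ℝ) : convo a b = a + (1 - 2 * a) * b := by
  unfold convo; ring

lemma convo_mem_Icc (ha : a ∈ Icc (0 : ℝ) (1 / 2)) (hb : b ∈ Icc (0 : ℝ) (1 / 2)) :
    convo a b ∈ Icc (0 : ℝ) (1 / 2) := by
  obtain ⟨ha0, ha1⟩ := ha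
  obtain ⟨hb0, hb1⟩ := hb
  rw [convo_eq_add_mul_left]
  constructor <;> nlinarith

lemma strictMono_convo_left (hb : b < 1 / 2) : StrictMono (convo · b) := by
  intro a a' haa'
  simp only [convo_eq_add_mul_left]
  nlinarith

lemma hasDerivAt_convo_right (a b : ℝ) : HasDerivAt (convo a) (1 - 2 * a) b := by
  have hconvo : convo a = fun b => a + (1 - 2 * a) * b := funext (convo_eq_add_mul_right a)
  rw [hconvo]
  simpa using ((hasDerivAt_id b).const_mul (1 - 2 * a)).const_add a

lemma binEntropy_convo_sub_strictAntiOn (ha : a ∈ Ioo (0 : ℝ) (1 / 2)) :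
    StrictAntiOn (fun b => binEntropy (convo a b) - binEntropy b) (Icc 0 (1 / 2)) := by
  obtain ⟨ha0, ha1⟩ := ha
  apply strictAntiOn_of_deriv_neg (convex_Icc 0 (1 / 2))
  · have hconvo : Continuous (convo a) :=
      continuous_iff_continuousAt.2 fun b => (hasDerivAt_convo_right a b).continuousAt
    exact ((binEntropy_continuous.comp hconvo).sub binEntropy_continuous).continuousOn
  rw [interior_Icc]
  rintro b ⟨hb0, hb1⟩
  set c := convo a b with hc
  have hbc : b < c := by rw [hc, convo_eq_add_mul_left]; nlinarith
  have hc1 : c < 1 / 2 := by rw [hc, convo_eq_add_mul_right]; nlinarith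
  have hderiv : HasDerivAt (fun b => binEntropy (convo a b) - binEntropy b)
      ((log (1 - c) - log c) * (1 - 2 * a) - (log (1 - b) - log b)) b :=
    ((hasDerivAt_binEntropy (by linarith) (by linarith)).comp b
      (hasDerivAt_convo_right a b)).sub (hasDerivAt_binEntropy hb0.ne' (by linarith))
  rw [hderiv.deriv]
  have hpos : 0 < log (1 - c) - log c := sub_pos.2 (log_lt_log (by linarith) (by linarith))
  have hlt : log (1 - c) - log c < log (1 - b) - log b := by
    linarith [log_lt_log hb0 hbc, log_lt_log (by linarith : 0 < 1 - c) (by linarith : 1 - c < 1 - b)]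
  nlinarith

lemma h2_convo_sub_strictAntiOn (ha : a ∈ Ioo (0 : ℝ) (1 / 2)) :
    StrictAntiOn (fun b => h2 (convo a b) - h2 b) (Icc 0 (1 / 2)) := by
  intro b hb b' hb' hbb'
  simp only [h2_eq_binEntropy_div, ← sub_div]
  exact div_lt_div_of_pos_right (binEntropy_convo_sub_strictAntiOn ha hb hb' hbb')
    (log_pos one_lt_two)

end Convolution

section Inverse

variable {g : ℝ → ℝ} (hg_mem : ∀ y ∈ Icc (0 : ℝ) 1, g y ∈ Icc (0 : ℝ) (1 / 2))
  (hg_inv : ∀ y ∈ Icc (0 : ℝ) 1, h2 (g y) = y)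
include hg_mem hg_inv

lemma strictMonoOn_of_h2_inverse : StrictMonoOn g (Icc 0 1) := by
  intro y hy y' hy' hyy'
  rw [← h2_strictMonoOn.lt_iff_lt (hg_mem y hy) (hg_mem y' hy'), hg_inv y hy, hg_inv y' hy']
  exact hyy'

lemma mem_Ioo_of_h2_inverse {y : ℝ} (hy : y ∈ Ioo (0 : ℝ) 1) : g y ∈ Ioo (0 : ℝ) (1 / 2) := by
  have hy' : y ∈ Icc (0 : ℝ) 1 := Ioo_subset_Icc_self hy
  obtain ⟨hg0, hg1⟩ := hg_mem y hy'
  refine ⟨hg0.lt_of_ne ?_, hg1.lt_of_ne ?_⟩ <;> rintro hgy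
  · have := hg_inv y hy'
    rw [← hgy, h2_zero] at this
    exact hy.1.ne this
  · have := hg_inv y hy'
    rw [hgy, h2_one_half] at this
    exact hy.2.ne' this

end Inverse

/-- Let `g = h₂⁻¹ : [0,1] → [0,1/2]` be the inverse of `h₂` restricted to
`[0,1/2]`. Then `f(x,y) = h₂(h₂⁻¹(x) * h₂⁻¹(y)) − y` is strictly increasing in `x` and
strictly decreasing in `y` on `(0,1/2) × (0,1/2)`. -/
theorem stmt_17 (g : ℝ → ℝ)
    (hg_mem : ∀ y ∈ Set.Icc (0 : ℝ) 1, g y ∈ Set.Icc (0 : ℝ) (1 / 2))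
    (hg_inv : ∀ y ∈ Set.Icc (0 : ℝ) 1, h2 (g y) = y) :
    (∀ x x' y : ℝ, x ∈ Set.Ioo (0 : ℝ) (1 / 2) → x' ∈ Set.Ioo (0 : ℝ) (1 / 2) →
      y ∈ Set.Ioo (0 : ℝ) (1 / 2) → x < x' →
      h2 (convo (g x) (g y)) - y < h2 (convo (g x') (g y)) - y) ∧
    (∀ x y y' : ℝ, x ∈ Set.Ioo (0 : ℝ) (1 / 2) → y ∈ Set.Ioo (0 : ℝ) (1 / 2) →
      y' ∈ Set.Ioo (0 : ℝ) (1 / 2) → y < y' →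
      h2 (convo (g x) (g y')) - y' < h2 (convo (g x) (g y)) - y) := by
  have hIoo : Ioo (0 : ℝ) (1 / 2) ⊆ Ioo 0 1 := Ioo_subset_Ioo_right (by norm_num)
  have hIcc : Ioo (0 : ℝ) (1 / 2) ⊆ Icc 0 1 := hIoo.trans Ioo_subset_Icc_self
  have hg_Ioo {t : ℝ} (ht : t ∈ Ioo (0 : ℝ) (1 / 2)) :=
    mem_Ioo_of_h2_inverse hg_mem hg_inv (hIoo ht)
  have hg_Icc {t : ℝ} (ht : t ∈ Ioo (0 : ℝ) (1 / 2)) := Ioo_subset_Icc_self (hg_Ioo ht)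
  have hg_mono := strictMonoOn_of_h2_inverse hg_mem hg_inv
  constructor
  · intro x x' y hx hx' hy hxx'
    have hconvo := strictMono_convo_left (hg_Ioo hy).2 (hg_mono (hIcc hx) (hIcc hx') hxx')
    exact sub_lt_sub_right (h2_strictMonoOn (convo_mem_Icc (hg_Icc hx) (hg_Icc hy))
      (convo_mem_Icc (hg_Icc hx') (hg_Icc hy)) hconvo) y
  · intro x y y' hx hy hy' hyy'
    have hanti := h2_convo_sub_strictAntiOn (hg_Ioo hx) (hg_Icc hy) (hg_Icc hy')
      (hg_mono (hIcc hy) (hIcc hy') hyy')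
    beta_reduce at hanti
    rwa [hg_inv y (hIcc hy), hg_inv y' (hIcc hy')] at hanti
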